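/- Let Ω ⊆ ℝ² be open, I a finite index set, and φ_i : ℝ² → ℝ, i ∈ I, functions differentiable at every point of Ω with Σ_{i∈I} φ_i = 1 on Ω. Define the second-order Whitney forms ψ_{ijk} := φ_i (∇φ_j × ∇φ_k) − φ_j (∇φ_i × ∇φ_k) − φ_k (∇φ_j × ∇φ_i) : Ω → ℝ, where a × b := a₁b₂ − a₂b₁ for a, b ∈ ℝ². Then for all i ≠ j in I and every x ∈ Ω, Σ_{k∈I, k∉{i,j}} ψ_{ijk}(x) = ∇φ_i(x) × ∇φ_j(x). Consequently, if the φ_i are twice continuously differentiable, the scalar curl of the first-order Whitney form ψ_{ij} = φ_i∇φ_j − φ_j∇φ_i satisfies ∇×ψ_{ij} = 2 Σ_{k≠i,j} ψ_{ijk} on Ω. -/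

import Mathlib

/-! Differentiating `∑ φ_k = 1` gives `∑ ∇φ_k = 0` on `Ω`. For fixed `i, j` the form `ψ_{ijk}` is
linear in `(φ_k, ∇φ_k)` and vanishes for `k ∈ {i, j}`, so the sum over `k ∉ {i, j}` is the sum over
all `k`, in which only `-φ_k (∇φ_j × ∇φ_i)` survives, giving `∇φ_i × ∇φ_j`.
For the curl, the product rule `∇×(f ∇g) = ∇f × ∇g + f ∇×∇g` together with `∇×∇g = 0` (symmetry of
second derivatives) gives `∇×ψ_{ij} = ∇φ_i × ∇φ_j - ∇φ_j × ∇φ_i = 2 ∇φ_i × ∇φ_j`. -/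

/-- The planar cross product `a × b := a₁ b₂ - a₂ b₁` of two vectors in `ℝ²`. -/
def cross2 (a b : EuclideanSpace ℝ (Fin 2)) : ℝ := a 0 * b 1 - a 1 * b 0

/-- The partial derivative `∂ᵢ f x` of a scalar function on `ℝ²`. -/
noncomputable def pderiv2 (i : Fin 2) (f : EuclideanSpace ℝ (Fin 2) → ℝ)
    (x : EuclideanSpace ℝ (Fin 2)) : ℝ :=
  fderiv ℝ f x (EuclideanSpace.single i 1)

/-- The scalar curl `∇×F := ∂₁F₂ - ∂₂F₁` of a planar vector field `F = (F₁, F₂)`. -/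
noncomputable def scurl (F : EuclideanSpace ℝ (Fin 2) → EuclideanSpace ℝ (Fin 2))
    (x : EuclideanSpace ℝ (Fin 2)) : ℝ :=
  pderiv2 0 (fun y => F y 1) x - pderiv2 1 (fun y => F y 0) x

open scoped Gradient
open Filter Topology

local notation "ℝ²" => EuclideanSpace ℝ (Fin 2)

section Gradient

variable {𝕜 F ι : Type*} [RCLike 𝕜] [NormedAddCommGroup F] [InnerProductSpace 𝕜 F]
  [CompleteSpace F] [Fintype ι]

theorem sum_gradient_eq_zero_of_sum_eventuallyEq_one {φ : ι → F → 𝕜} {x : F}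
    (hφ : ∀ i, DifferentiableAt 𝕜 (φ i) x) (hsum : (fun y => ∑ i, φ i y) =ᶠ[𝓝 x] fun _ => 1) :
    ∑ i, ∇ (φ i) x = 0 := by
  have hgrad : HasGradientAt (fun y => ∑ i, φ i y) (∑ i, ∇ (φ i) x) x := by
    rw [hasGradientAt_iff_hasFDerivAt, map_sum]
    exact HasFDerivAt.fun_sum fun i _ => (hφ i).hasGradientAt
  rw [← hgrad.gradient, hsum.gradient_eq, gradient_fun_const]

end Gradient

section EuclideanSpace

variable {ι : Type*} [Fintype ι] [DecidableEq ι] {f : EuclideanSpace ℝ ι → ℝ}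
  {x : EuclideanSpace ℝ ι}

theorem gradient_apply_eq_fderiv_single (m : ι) :
    ∇ f x m = fderiv ℝ f x (EuclideanSpace.single m 1) := by
  rw [← inner_gradient_left, EuclideanSpace.inner_single_right]
  simp

theorem differentiableAt_gradient (hf : ContDiffAt ℝ 2 f x) : DifferentiableAt ℝ (∇ f) x := by
  have hD := (hf.fderiv_right (m := 1) le_rfl).differentiableAt one_ne_zero
  refine differentiableAt_euclidean.mpr fun m => ?_
  simp_rw [gradient_apply_eq_fderiv_single]
  exact hD.clm_apply (differentiableAt_const _)

end EuclideanSpace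

section Cross

variable {ι : Type*} (s : Finset ι) (a b : ℝ²) (v : ι → ℝ²)

theorem cross2_self : cross2 a a = 0 := by
  rw [cross2]; ring

theorem cross2_swap : cross2 b a = -cross2 a b := by
  rw [cross2, cross2]; ring

theorem cross2_sum_right : cross2 a (∑ k ∈ s, v k) = ∑ k ∈ s, cross2 a (v k) := by
  simp [cross2, Finset.mul_sum, Finset.sum_sub_distrib]

end Cross

section Whitney

variable {I : Type*} (p : I → ℝ) (g : I → ℝ²) (i j : I)

def whitneyTwoForm (k : I) : ℝ :=
  p i * cross2 (g j) (g k) - p j * cross2 (g i) (g k) - p k * cross2 (g j) (g i)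

theorem whitneyTwoForm_left : whitneyTwoForm p g i j i = 0 := by
  rw [whitneyTwoForm, cross2_self, cross2_swap (g i)]; ring

theorem whitneyTwoForm_right : whitneyTwoForm p g i j j = 0 := by
  rw [whitneyTwoForm, cross2_self, cross2_swap (g j)]; ring

variable {p g} [Fintype I]

theorem sum_whitneyTwoForm (hp : ∑ k, p k = 1) (hg : ∑ k, g k = 0) :
    ∑ k, whitneyTwoForm p g i j k = cross2 (g i) (g j) := by
  simp only [whitneyTwoForm, Finset.sum_sub_distrib, ← Finset.mul_sum, ← Finset.sum_mul,
    ← cross2_sum_right, hp, hg]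
  rw [cross2_swap (g i)]
  simp [cross2]

theorem sum_filter_whitneyTwoForm [DecidableEq I] (hp : ∑ k, p k = 1) (hg : ∑ k, g k = 0) :
    ∑ k ∈ Finset.univ.filter (fun k => k ≠ i ∧ k ≠ j), whitneyTwoForm p g i j k
      = cross2 (g i) (g j) := by
  rw [Finset.sum_filter_of_ne, sum_whitneyTwoForm i j hp hg]
  rintro k - hk
  refine ⟨?_, ?_⟩ <;> rintro rfl
  exacts [hk (whitneyTwoForm_left p g k j), hk (whitneyTwoForm_right p g i k)]

end Whitney

section Curl

variable {f g : ℝ² → ℝ} {F G : ℝ² → ℝ²} {x : ℝ²} (n : Fin 2)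

theorem gradient_apply_eq_pderiv2 : ∇ f x n = pderiv2 n f x :=
  gradient_apply_eq_fderiv_single n

theorem pderiv2_mul (hf : DifferentiableAt ℝ f x) (hg : DifferentiableAt ℝ g x) :
    pderiv2 n (fun y => f y * g y) x = f x * pderiv2 n g x + g x * pderiv2 n f x := by
  simp [pderiv2, fderiv_fun_mul hf hg]

theorem pderiv2_sub (hf : DifferentiableAt ℝ f x) (hg : DifferentiableAt ℝ g x) :
    pderiv2 n (fun y => f y - g y) x = pderiv2 n f x - pderiv2 n g x := by
  simp [pderiv2, fderiv_fun_sub hf hg]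

theorem pderiv2_gradient_apply (hf : ContDiffAt ℝ 2 f x) (m : Fin 2) :
    pderiv2 n (fun y => ∇ f y m) x
      = fderiv ℝ (fderiv ℝ f) x (EuclideanSpace.single n 1) (EuclideanSpace.single m 1) := by
  have hD := (hf.fderiv_right (m := 1) le_rfl).differentiableAt one_ne_zero
  simp_rw [pderiv2, gradient_apply_eq_fderiv_single]
  rw [fderiv_clm_apply hD (differentiableAt_const _)]
  simp

theorem scurl_sub (hF : DifferentiableAt ℝ F x) (hG : DifferentiableAt ℝ G x) :
    scurl (fun y => F y - G y) x = scurl F x - scurl G x := by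
  have hF' := differentiableAt_euclidean.mp hF
  have hG' := differentiableAt_euclidean.mp hG
  simp only [scurl, PiLp.sub_apply, pderiv2_sub _ (hF' _) (hG' _)]
  ring

theorem scurl_smul (hf : DifferentiableAt ℝ f x) (hF : DifferentiableAt ℝ F x) :
    scurl (fun y => f y • F y) x = cross2 (∇ f x) (F x) + f x * scurl F x := by
  have hF' := differentiableAt_euclidean.mp hF
  simp only [scurl, PiLp.smul_apply, smul_eq_mul]
  rw [pderiv2_mul _ hf (hF' _), pderiv2_mul _ hf (hF' _), cross2,
    gradient_apply_eq_pderiv2, gradient_apply_eq_pderiv2]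
  ring

theorem scurl_gradient (hf : ContDiffAt ℝ 2 f x) : scurl (∇ f) x = 0 := by
  rw [scurl, pderiv2_gradient_apply _ hf, pderiv2_gradient_apply _ hf,
    (hf.isSymmSndFDerivAt (by simp)).eq, sub_self]

theorem scurl_whitneyOneForm (hf : ContDiffAt ℝ 2 f x) (hg : ContDiffAt ℝ 2 g x) :
    scurl (fun y => f y • ∇ g y - g y • ∇ f y) x = 2 * cross2 (∇ f x) (∇ g x) := by
  have hf₁ := hf.differentiableAt (by simp)
  have hg₁ := hg.differentiableAt (by simp)
  rw [scurl_sub (hf₁.fun_smul (differentiableAt_gradient hg))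
      (hg₁.fun_smul (differentiableAt_gradient hf)),
    scurl_smul hf₁ (differentiableAt_gradient hg), scurl_smul hg₁ (differentiableAt_gradient hf),
    scurl_gradient hf, scurl_gradient hg, cross2_swap (∇ f x)]
  ring

end Curl

/-- For a partition of unity `{φ i}` on an open set `Ω ⊆ ℝ²`, the
second-order Whitney forms
`ψ₃ i j k = φ i (∇φ j × ∇φ k) - φ j (∇φ i × ∇φ k) - φ k (∇φ j × ∇φ i)` satisfy the
telescoping identity `∑_{k ∉ {i,j}} ψ₃ i j k = ∇φ i × ∇φ j` on `Ω` for `i ≠ j`.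
Consequently, if the `φ i` are twice continuously differentiable, the scalar curl of the
first-order Whitney form `ψ₂ i j = φ i • ∇φ j - φ j • ∇φ i` satisfies
`∇×(ψ₂ i j) = 2 ∑_{k ∉ {i,j}} ψ₃ i j k` on `Ω`. -/
theorem sum_whitney_two_forms_and_scurl
    {I : Type*} [Fintype I] [DecidableEq I]
    (Ω : Set (EuclideanSpace ℝ (Fin 2))) (hΩ : IsOpen Ω)
    (φ : I → EuclideanSpace ℝ (Fin 2) → ℝ)
    (hdiff : ∀ i, ∀ x ∈ Ω, DifferentiableAt ℝ (φ i) x)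
    (hsum : ∀ x ∈ Ω, ∑ i, φ i x = 1)
    (ψ₂ : I → I → EuclideanSpace ℝ (Fin 2) → EuclideanSpace ℝ (Fin 2))
    (hψ₂ : ∀ i j x, ψ₂ i j x = φ i x • gradient (φ j) x - φ j x • gradient (φ i) x)
    (ψ₃ : I → I → I → EuclideanSpace ℝ (Fin 2) → ℝ)
    (hψ₃ : ∀ i j k x, ψ₃ i j k x
      = φ i x * cross2 (gradient (φ j) x) (gradient (φ k) x)
        - φ j x * cross2 (gradient (φ i) x) (gradient (φ k) x)
        - φ k x * cross2 (gradient (φ j) x) (gradient (φ i) x)) :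
    (∀ i j, i ≠ j → ∀ x ∈ Ω,
        ∑ k ∈ Finset.univ.filter (fun k => k ≠ i ∧ k ≠ j), ψ₃ i j k x
          = cross2 (gradient (φ i) x) (gradient (φ j) x))
    ∧ ((∀ i, ContDiffOn ℝ 2 (φ i) Ω) → ∀ i j, i ≠ j → ∀ x ∈ Ω,
        scurl (ψ₂ i j) x
          = 2 * ∑ k ∈ Finset.univ.filter (fun k => k ≠ i ∧ k ≠ j), ψ₃ i j k x) := by
  have hsum_whitney : ∀ i j, ∀ x ∈ Ω,
      ∑ k ∈ Finset.univ.filter (fun k => k ≠ i ∧ k ≠ j), ψ₃ i j k x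
        = cross2 (∇ (φ i) x) (∇ (φ j) x) := by
    intro i j x hx
    have hgrad : ∑ k, ∇ (φ k) x = 0 :=
      sum_gradient_eq_zero_of_sum_eventuallyEq_one (fun k => hdiff k x hx)
        (eventually_of_mem (hΩ.mem_nhds hx) hsum)
    have hψ : ∀ k, ψ₃ i j k x = whitneyTwoForm (fun k => φ k x) (fun k => ∇ (φ k) x) i j k :=
      fun k => hψ₃ i j k x
    simp only [hψ]
    exact sum_filter_whitneyTwoForm i j (hsum x hx) hgrad
  refine ⟨fun i j _ => hsum_whitney i j, fun hC2 i j _ x hx => ?_⟩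
  have hC : ∀ k, ContDiffAt ℝ 2 (φ k) x := fun k => (hC2 k).contDiffAt (hΩ.mem_nhds hx)
  rw [hsum_whitney i j x hx, show ψ₂ i j = _ from funext (hψ₂ i j),
    scurl_whitneyOneForm (hC i) (hC j)]
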